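/- For any fixed real numbers ω_i and ω_j, the function f : (−1,1) → ℝ defined by f(r) = ∫_{−∞}^{ω_i} Φ((ω_j − r·x)/√(1−r²)) φ(x) dx is differentiable on (−1,1), with derivative f'(r) = φ(ω_i) · φ((ω_j − r·ω_i)/√(1−r²)) / √(1−r²) for every r ∈ (−1,1); in particular f'(r) > 0. -/

import Mathlib

open MeasureTheory Real

/-- The standard normal density `φ(x) = (2π)^{-1/2} exp(−x²/2)`. -/
noncomputable def stdNormalPDF (x : ℝ) : ℝ :=
  (Real.sqrt (2 * Real.pi))⁻¹ * Real.exp (-x ^ 2 / 2)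

/-- The standard normal distribution function `Φ(x) = ∫_{−∞}^x φ(u) du`. -/
noncomputable def stdNormalCDF (x : ℝ) : ℝ :=
  ∫ u in Set.Iic x, stdNormalPDF u

/-! `f(r)` is the bivariate standard normal distribution function with correlation `r` at
`(ω_i, ω_j)`, and the claim is Plackett's identity `∂ᵣΦ₂ = φ₂`. Differentiating under the integral
sign (dominated by `C (|ω_j| + |x|) φ(x)` locally uniformly in `r`) gives
`f'(r) = ∫_{−∞}^{ω_i} φ(u) ∂ᵣu φ(x) dx` with `u = (ω_j − r x)/√(1−r²)`, and this integrand is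
exactly the `x`-derivative of the density `φ₂(r, x, ω_j) = φ(x) φ(u) / √(1−r²)`, so the integral
is `φ₂(r, ω_i, ω_j)` by the fundamental theorem of calculus on `(−∞, ω_i]`. -/

open Set Filter Topology ProbabilityTheory

lemma stdNormalPDF_eq_gaussianPDFReal : stdNormalPDF = gaussianPDFReal 0 1 := by
  ext x
  simp [stdNormalPDF, gaussianPDFReal]

lemma stdNormalPDF_pos (x : ℝ) : 0 < stdNormalPDF x := by
  unfold stdNormalPDF; positivity

@[fun_prop]
lemma continuous_stdNormalPDF : Continuous stdNormalPDF := by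
  unfold stdNormalPDF; fun_prop

lemma stdNormalPDF_le (x : ℝ) : stdNormalPDF x ≤ (√(2 * π))⁻¹ := by
  unfold stdNormalPDF
  refine mul_le_of_le_one_right (by positivity) (exp_le_one_iff.2 ?_)
  nlinarith [sq_nonneg x]

lemma integrable_stdNormalPDF : Integrable stdNormalPDF := by
  rw [stdNormalPDF_eq_gaussianPDFReal]
  exact integrable_gaussianPDFReal 0 1

lemma integral_stdNormalPDF : ∫ x, stdNormalPDF x = 1 := by
  rw [stdNormalPDF_eq_gaussianPDFReal]
  exact integral_gaussianPDFReal_eq_one 0 one_ne_zero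

lemma integrable_mul_stdNormalPDF : Integrable fun x => x * stdNormalPDF x := by
  have h := (integrable_mul_exp_neg_mul_sq (by norm_num : (0 : ℝ) < 1 / 2)).const_mul
    (√(2 * π))⁻¹
  refine h.congr (Eventually.of_forall fun x => ?_)
  simp only [stdNormalPDF]
  ring_nf

lemma hasDerivAt_stdNormalPDF (x : ℝ) : HasDerivAt stdNormalPDF (-x * stdNormalPDF x) x := by
  have h : HasDerivAt (fun x : ℝ => -x ^ 2 / 2) (-x) x := by
    simpa using ((hasDerivAt_pow 2 x).neg.div_const 2).congr_deriv (by ring)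
  exact (h.exp.const_mul (√(2 * π))⁻¹).congr_deriv (by unfold stdNormalPDF; ring)

lemma hasDerivAt_stdNormalCDF (x : ℝ) : HasDerivAt stdNormalCDF (stdNormalPDF x) x := by
  have h : (fun y => stdNormalCDF 0 + ∫ t in (0 : ℝ)..y, stdNormalPDF t) = stdNormalCDF := by
    ext y
    rw [stdNormalCDF, stdNormalCDF, ← intervalIntegral.integral_Iic_sub_Iic
      integrable_stdNormalPDF.integrableOn integrable_stdNormalPDF.integrableOn]
    ring
  rw [← h]
  exact (intervalIntegral.integral_hasDerivAt_right integrable_stdNormalPDF.intervalIntegrable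
    (continuous_stdNormalPDF.stronglyMeasurableAtFilter _ _)
    continuous_stdNormalPDF.continuousAt).const_add _

@[fun_prop]
lemma continuous_stdNormalCDF : Continuous stdNormalCDF :=
  continuous_iff_continuousAt.2 fun x => (hasDerivAt_stdNormalCDF x).continuousAt

lemma stdNormalCDF_nonneg (x : ℝ) : 0 ≤ stdNormalCDF x :=
  setIntegral_nonneg measurableSet_Iic fun y _ => (stdNormalPDF_pos y).le

lemma stdNormalCDF_le_one (x : ℝ) : stdNormalCDF x ≤ 1 :=
  integral_stdNormalPDF ▸ setIntegral_le_integral integrable_stdNormalPDF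
    (Eventually.of_forall fun y => (stdNormalPDF_pos y).le)

/-- The standard bivariate normal density with correlation `r`, written as `φ(x)` times the
conditional density of the second coordinate, which is normal with mean `r x` and variance
`1 - r²`. -/
noncomputable def bivariateStdNormalPDF (r x y : ℝ) : ℝ :=
  stdNormalPDF x * stdNormalPDF ((y - r * x) / √(1 - r ^ 2)) / √(1 - r ^ 2)

noncomputable def bivariateStdNormalPDFDerivFst (r x y : ℝ) : ℝ :=
  stdNormalPDF ((y - r * x) / √(1 - r ^ 2)) * ((r * y - x) / √(1 - r ^ 2) ^ 3) * stdNormalPDF x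

lemma hasDerivAt_sub_mul_div_sqrt_one_sub_sq (x y : ℝ) {r : ℝ} (hr : r ^ 2 < 1) :
    HasDerivAt (fun r => (y - r * x) / √(1 - r ^ 2)) ((r * y - x) / √(1 - r ^ 2) ^ 3) r := by
  have h1 : 0 < 1 - r ^ 2 := by linarith
  have hs : √(1 - r ^ 2) ≠ 0 := (Real.sqrt_pos.2 h1).ne'
  have hsq : √(1 - r ^ 2) ^ 2 = 1 - r ^ 2 := Real.sq_sqrt h1.le
  have hsqrt : HasDerivAt (fun r => √(1 - r ^ 2)) (-r / √(1 - r ^ 2)) r := by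
    refine (((hasDerivAt_pow 2 r).const_sub 1).sqrt h1.ne').congr_deriv ?_
    field_simp
    push_cast
    ring
  have hnum : HasDerivAt (fun r => y - r * x) (-x) r := by
    simpa using ((hasDerivAt_id r).mul_const x).const_sub y
  refine (hnum.div hsqrt hs).congr_deriv ?_
  field_simp
  linear_combination -x * hsq

lemma hasDerivAt_stdNormalCDF_comp_mul_stdNormalPDF (x y : ℝ) {r : ℝ} (hr : r ^ 2 < 1) :
    HasDerivAt (fun r => stdNormalCDF ((y - r * x) / √(1 - r ^ 2)) * stdNormalPDF x)
      (bivariateStdNormalPDFDerivFst r x y) r :=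
  ((hasDerivAt_stdNormalCDF _).comp r (hasDerivAt_sub_mul_div_sqrt_one_sub_sq x y hr)).mul_const _

lemma hasDerivAt_bivariateStdNormalPDF_fst {r : ℝ} (hr : r ^ 2 < 1) (x y : ℝ) :
    HasDerivAt (fun x => bivariateStdNormalPDF r x y)
      (bivariateStdNormalPDFDerivFst r x y) x := by
  have h1 : 0 < 1 - r ^ 2 := by linarith
  have hs : √(1 - r ^ 2) ≠ 0 := (Real.sqrt_pos.2 h1).ne'
  have hsq : √(1 - r ^ 2) ^ 2 = 1 - r ^ 2 := Real.sq_sqrt h1.le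
  have harg : HasDerivAt (fun x => (y - r * x) / √(1 - r ^ 2)) (-r / √(1 - r ^ 2)) x := by
    simpa [neg_div] using (((hasDerivAt_id x).const_mul r).const_sub y).div_const (√(1 - r ^ 2))
  refine (((hasDerivAt_stdNormalPDF x).mul
    ((hasDerivAt_stdNormalPDF _).comp x harg)).div_const _).congr_deriv ?_
  unfold bivariateStdNormalPDFDerivFst
  simp only [Function.comp_apply]
  set p := stdNormalPDF ((y - r * x) / √(1 - r ^ 2))
  field_simp
  linear_combination (-x * p * stdNormalPDF x) * hsq

lemma abs_bivariateStdNormalPDFDerivFst_le {r δ : ℝ} (hδ : 0 < δ) (hrδ : δ ≤ √(1 - r ^ 2))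
    (x y : ℝ) :
    |bivariateStdNormalPDFDerivFst r x y| ≤
      (√(2 * π))⁻¹ / δ ^ 3 * ((|y| + |x|) * stdNormalPDF x) := by
  have hr : |r| ≤ 1 := by
    have := hδ.trans_le hrδ
    rw [Real.sqrt_pos, sub_pos, ← sq_abs] at this
    nlinarith [abs_nonneg r]
  have hnum : |r * y - x| ≤ |y| + |x| :=
    (abs_sub _ _).trans (by rw [abs_mul]; gcongr; exact mul_le_of_le_one_left (abs_nonneg y) hr)
  unfold bivariateStdNormalPDFDerivFst
  rw [abs_mul, abs_mul, abs_div, abs_of_pos (stdNormalPDF_pos _),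
    abs_of_pos (stdNormalPDF_pos _), abs_of_pos (pow_pos (hδ.trans_le hrδ) 3)]
  calc stdNormalPDF ((y - r * x) / √(1 - r ^ 2)) * (|r * y - x| / √(1 - r ^ 2) ^ 3) *
        stdNormalPDF x
      ≤ (√(2 * π))⁻¹ * ((|y| + |x|) / δ ^ 3) * stdNormalPDF x := by
        gcongr
        exacts [(stdNormalPDF_pos x).le, stdNormalPDF_le _]
    _ = _ := by ring

lemma integrable_add_abs_mul_stdNormalPDF (y : ℝ) :
    Integrable fun x => (|y| + |x|) * stdNormalPDF x :=
  ((integrable_stdNormalPDF.const_mul |y|).add integrable_mul_stdNormalPDF.abs).congr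
    (Eventually.of_forall fun x => by simp [abs_mul, abs_of_pos (stdNormalPDF_pos x), add_mul])

lemma integrable_bivariateStdNormalPDFDerivFst {r : ℝ} (hr : r ^ 2 < 1) (y : ℝ) :
    Integrable fun x => bivariateStdNormalPDFDerivFst r x y := by
  refine ((integrable_add_abs_mul_stdNormalPDF y).const_mul
    ((√(2 * π))⁻¹ / √(1 - r ^ 2) ^ 3)).mono'
    (by unfold bivariateStdNormalPDFDerivFst; fun_prop) (Eventually.of_forall fun x => ?_)
  exact abs_bivariateStdNormalPDFDerivFst_le (Real.sqrt_pos.2 (by linarith)) le_rfl x y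

lemma integrable_bivariateStdNormalPDF (r y : ℝ) :
    Integrable fun x => bivariateStdNormalPDF r x y := by
  refine (integrable_stdNormalPDF.mul_const ((√(2 * π))⁻¹ / √(1 - r ^ 2))).mono'
    (by unfold bivariateStdNormalPDF; fun_prop) (Eventually.of_forall fun x => ?_)
  rw [bivariateStdNormalPDF, Real.norm_eq_abs, abs_of_nonneg (by
    have := stdNormalPDF_pos x; have := stdNormalPDF_pos ((y - r * x) / √(1 - r ^ 2))
    positivity), mul_div_assoc]
  gcongr
  exacts [(stdNormalPDF_pos x).le, stdNormalPDF_le _]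

lemma integral_Iic_bivariateStdNormalPDFDerivFst {r : ℝ} (hr : r ^ 2 < 1) (a y : ℝ) :
    ∫ x in Iic a, bivariateStdNormalPDFDerivFst r x y = bivariateStdNormalPDF r a y := by
  have hderiv : ∀ x ∈ Iic a, HasDerivAt (fun x => bivariateStdNormalPDF r x y)
      (bivariateStdNormalPDFDerivFst r x y) x :=
    fun x _ => hasDerivAt_bivariateStdNormalPDF_fst hr x y
  have hint := (integrable_bivariateStdNormalPDFDerivFst hr y).integrableOn (s := Iic a)
  rw [integral_Iic_of_hasDerivAt_of_tendsto' hderiv hint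
    (tendsto_zero_of_hasDerivAt_of_integrableOn_Iic hderiv hint
      (integrable_bivariateStdNormalPDF r y).integrableOn), sub_zero]

lemma bivariateStdNormalPDF_pos {r : ℝ} (hr : r ^ 2 < 1) (x y : ℝ) :
    0 < bivariateStdNormalPDF r x y :=
  div_pos (mul_pos (stdNormalPDF_pos _) (stdNormalPDF_pos _)) (Real.sqrt_pos.2 (by linarith))

lemma hasDerivAt_setIntegral_stdNormalCDF_comp_mul_stdNormalPDF (s : Set ℝ) (y : ℝ) {r₀ : ℝ}
    (hr₀ : |r₀| < 1) :
    HasDerivAt (fun r => ∫ x in s, stdNormalCDF ((y - r * x) / √(1 - r ^ 2)) * stdNormalPDF x)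
      (∫ x in s, bivariateStdNormalPDFDerivFst r₀ x y) r₀ := by
  obtain ⟨ρ, hr₀ρ, hρ⟩ := exists_between hr₀
  have hρ₀ : 0 < ρ := (abs_nonneg r₀).trans_lt hr₀ρ
  have hnhds : Ioo (-ρ) ρ ∈ 𝓝 r₀ :=
    Ioo_mem_nhds (by linarith [neg_abs_le r₀]) ((le_abs_self r₀).trans_lt hr₀ρ)
  have hsq : ∀ r ∈ Ioo (-ρ) ρ, r ^ 2 < ρ ^ 2 := fun r hr => sq_lt_sq' hr.1 hr.2
  have hδ : 0 < √(1 - ρ ^ 2) := Real.sqrt_pos.2 (by nlinarith)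
  have hint : Integrable (fun x => stdNormalCDF ((y - r₀ * x) / √(1 - r₀ ^ 2)) * stdNormalPDF x)
      (volume.restrict s) :=
    integrable_stdNormalPDF.restrict.mono' (by fun_prop) <| Eventually.of_forall fun x => by
      rw [Real.norm_eq_abs, abs_of_nonneg (mul_nonneg (stdNormalCDF_nonneg _)
        (stdNormalPDF_pos x).le)]
      exact mul_le_of_le_one_left (stdNormalPDF_pos x).le (stdNormalCDF_le_one _)
  refine (hasDerivAt_integral_of_dominated_loc_of_deriv_le hnhds
    (Eventually.of_forall fun r => (by fun_prop : Continuous _).aestronglyMeasurable) hint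
    (integrable_bivariateStdNormalPDFDerivFst (by nlinarith [hsq r₀ (mem_of_mem_nhds hnhds)])
      y).aestronglyMeasurable.restrict
    (ae_of_all _ fun x r hr => abs_bivariateStdNormalPDFDerivFst_le hδ
      (Real.sqrt_le_sqrt (by linarith [hsq r hr])) x y)
    ((integrable_add_abs_mul_stdNormalPDF y).const_mul _).restrict
    (ae_of_all _ fun x r hr => hasDerivAt_stdNormalCDF_comp_mul_stdNormalPDF x y
      (by nlinarith [hsq r hr]))).2

/-- For fixed `ω_i, ω_j ∈ ℝ`, the function
`f(r) = ∫_{−∞}^{ω_i} Φ((ω_j − r·x)/√(1−r²)) φ(x) dx` is differentiable on `(−1,1)` with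
`f'(r) = φ(ω_i)·φ((ω_j − r·ω_i)/√(1−r²)) / √(1−r²)`, which is positive. -/
theorem stmt4 (ωi ωj : ℝ) :
    ∀ r ∈ Set.Ioo (-1 : ℝ) 1,
      HasDerivAt
        (fun r : ℝ =>
          ∫ x in Set.Iic ωi,
            stdNormalCDF ((ωj - r * x) / Real.sqrt (1 - r ^ 2)) * stdNormalPDF x)
        (stdNormalPDF ωi * stdNormalPDF ((ωj - r * ωi) / Real.sqrt (1 - r ^ 2)) /
          Real.sqrt (1 - r ^ 2)) r ∧
      0 < stdNormalPDF ωi * stdNormalPDF ((ωj - r * ωi) / Real.sqrt (1 - r ^ 2)) /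
          Real.sqrt (1 - r ^ 2) := by
  intro r hr
  have hr₂ : r ^ 2 < 1 := by nlinarith [hr.1, hr.2]
  have hderiv := hasDerivAt_setIntegral_stdNormalCDF_comp_mul_stdNormalPDF (Iic ωi) ωj (abs_lt.2 hr)
  rw [integral_Iic_bivariateStdNormalPDFDerivFst hr₂] at hderiv
  exact ⟨hderiv, bivariateStdNormalPDF_pos hr₂ ωi ωj⟩
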